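/- Let R be a discrete valuation ring with valuation v in which 2 is a unit, let f(x) = x² − ax − b ∈ R[x] be monic irreducible over the fraction field K, and let θ be the class of x in R[θ] := R[x]/(f). Then the set of equivalence classes of nonzero ideals of R[θ] is finite of cardinality ⌊½v(a²/4 + b)⌋ + 1. -/

import Mathlib

/-!
Completing the square, `R[θ]` is free over `R` with basis `1, θ`, where `θ = x - a/2` and
`θ² = d := a²/4 + b`, `v(d) = m`. Every nonzero ideal is `g · (s, r + θ)` with `s ∣ r² - d`
(the Hermite normal form of the `R`-lattice). The ideal `(s, r + θ)` depends only on `r mod s`,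
and multiplying by `r - θ` shows `(s, r + θ) ∼ (t, -r + θ)` whenever `r² - d = s t ε` with `ε` a
unit. These two moves bring every ideal to some `Iⱼ = (πʲ, θ)` with `j ≤ m/2`. The classes of
these are distinct: `θ Iⱼ ⊆ πⁱ Iⱼ` is invariant under equivalence, holds for `i = j` and forces
`i ≤ j`.
-/

open Polynomial Ideal

section IdealEquiv

variable {A : Type*} [CommRing A]

def IdealEquiv (I J : Ideal A) : Prop :=
  ∃ α₁ α₂ : A, α₁ ≠ 0 ∧ α₂ ≠ 0 ∧ span {α₁} * I = span {α₂} * J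

namespace IdealEquiv

variable {I J K : Ideal A}

theorem refl [Nontrivial A] (I : Ideal A) : IdealEquiv I I :=
  ⟨1, 1, one_ne_zero, one_ne_zero, rfl⟩

theorem symm (h : IdealEquiv I J) : IdealEquiv J I :=
  let ⟨α₁, α₂, h₁, h₂, e⟩ := h
  ⟨α₂, α₁, h₂, h₁, e.symm⟩

theorem trans [IsDomain A] (h : IdealEquiv I J) (h' : IdealEquiv J K) : IdealEquiv I K := by
  obtain ⟨α₁, α₂, h₁, h₂, e⟩ := h
  obtain ⟨β₁, β₂, h₁', h₂', e'⟩ := h'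
  refine ⟨β₁ * α₁, α₂ * β₂, mul_ne_zero h₁' h₁, mul_ne_zero h₂ h₂', ?_⟩
  rw [← span_singleton_mul_span_singleton, ← span_singleton_mul_span_singleton, mul_assoc, e,
    mul_left_comm, e', mul_assoc]

theorem span_singleton_mul_left {α : A} (hα : α ≠ 0) (I : Ideal A) :
    IdealEquiv (span {α} * I) I :=
  have : Nontrivial A := ⟨⟨α, 0, hα⟩⟩
  ⟨1, α, one_ne_zero, hα, by rw [span_singleton_one, top_mul]⟩

theorem span_mul_le_span_mul_iff [IsDomain A] (h : IdealEquiv I J) (β γ : A) :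
    span {β} * I ≤ span {γ} * I ↔ span {β} * J ≤ span {γ} * J := by
  obtain ⟨α₁, α₂, h₁, h₂, e⟩ := h
  rw [← span_singleton_mul_right_mono h₁, mul_left_comm (span {α₁}), mul_left_comm (span {α₁}), e,
    mul_left_comm (span {β}), mul_left_comm (span {γ}), span_singleton_mul_right_mono h₂]

end IdealEquiv

end IdealEquiv

structure IsQuadraticBasis {R A : Type*} [CommRing R] [CommRing A]
    (ι : R →+* A) (θ : A) (d : R) : Prop where
  sq_eq : θ ^ 2 = ι d
  exists_eq : ∀ z : A, ∃ x y : R, z = ι x + ι y * θ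
  eq_zero : ∀ x y : R, ι x + ι y * θ = 0 → x = 0 ∧ y = 0

section QuadraticBasis

variable {R A : Type*} [CommRing R] [CommRing A] {ι : R →+* A} {θ : A} {d : R}

namespace IsQuadraticBasis

variable (hq : IsQuadraticBasis ι θ d)
include hq

theorem coords_eq {x y x' y' : R} (h : ι x + ι y * θ = ι x' + ι y' * θ) :
    x = x' ∧ y = y' := by
  have h0 := hq.eq_zero (x - x') (y - y') (by simp only [map_sub]; linear_combination h)
  exact ⟨sub_eq_zero.mp h0.1, sub_eq_zero.mp h0.2⟩

theorem map_ne_zero {x : R} (hx : x ≠ 0) : ι x ≠ 0 := fun h =>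
  hx (hq.eq_zero x 0 (by simp [h])).1

theorem add_ne_zero [Nontrivial R] (r : R) : ι r + θ ≠ 0 := fun h =>
  one_ne_zero (hq.eq_zero r 1 (by simpa using h)).2

theorem sub_ne_zero [Nontrivial R] (r : R) : ι r - θ ≠ 0 := fun h =>
  one_ne_zero <| neg_eq_zero.mp (hq.eq_zero r (-1) (by simpa [← sub_eq_add_neg] using h)).2

theorem add_mul_sub (r : R) : (ι r + θ) * (ι r - θ) = ι (r ^ 2 - d) := by
  rw [map_sub, map_pow, ← hq.sq_eq]
  ring

theorem dvd_of_mul_mem_span_singleton {s t : R} (h : ι s * θ ∈ span {ι t}) : t ∣ s := by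
  obtain ⟨z, hz⟩ := mem_span_singleton'.mp h
  obtain ⟨x, y, rfl⟩ := hq.exists_eq z
  have := hq.coords_eq (x := 0) (y := s) (x' := t * x) (y' := t * y) (by
    simp only [map_zero, map_mul, zero_add]
    linear_combination -hz)
  exact ⟨y, this.2⟩

end IsQuadraticBasis

theorem span_singleton_mul_span_pair (a b c : A) :
    span {a} * span {b, c} = span {a * b, a * c} := by
  rw [span_insert, Ideal.mul_sup, span_singleton_mul_span_singleton,
    span_singleton_mul_span_singleton, ← span_insert]

variable (ι θ) in
def pairIdeal (s r : R) : Ideal A := span {ι s, ι r + θ}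

theorem pairIdeal_congr {s r r' : R} (h : s ∣ r - r') :
    pairIdeal ι θ s r = pairIdeal ι θ s r' := by
  obtain ⟨c, hc⟩ := h
  rw [pairIdeal, pairIdeal, ← span_pair_add_mul_left (y := ι r' + θ) (z := ι c),
    ← map_mul, mul_comm c, ← hc, map_sub]
  ring_nf

theorem IsQuadraticBasis.pairIdeal_ne_bot [Nontrivial R] (hq : IsQuadraticBasis ι θ d)
    (s r : R) : pairIdeal ι θ s r ≠ ⊥ := fun h =>
  hq.add_ne_zero r <| (Submodule.mem_bot A).mp (h ▸ subset_span (by simp))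

theorem span_sub_mul_pairIdeal (hθ : θ ^ 2 = ι d) {r s t ε : R} (hε : IsUnit ε)
    (h : r ^ 2 - d = s * t * ε) :
    span {ι r - θ} * pairIdeal ι θ s r = span {ι s} * pairIdeal ι θ t (-r) := by
  have hconj : (ι r - θ) * (ι r + θ) = ι s * ι t * ι ε := by
    rw [← map_mul, ← map_mul, ← h, map_sub, map_pow, ← hθ]; ring
  rw [pairIdeal, pairIdeal, span_singleton_mul_span_pair, span_singleton_mul_span_pair,
    hconj, span_insert, span_insert, span_singleton_mul_right_unit (hε.map ι),
    show (ι r - θ) * ι s = -(ι s * (ι (-r) + θ)) by rw [map_neg]; ring, span_singleton_neg,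
    sup_comm]

theorem span_mul_pairIdeal_zero_le (hθ : θ ^ 2 = ι d) {s : R} (h : s * s ∣ d) :
    span {θ} * pairIdeal ι θ s 0 ≤ span {ι s} * pairIdeal ι θ s 0 := by
  obtain ⟨e, rfl⟩ := h
  rw [pairIdeal, map_zero, zero_add, span_singleton_mul_span_pair,
    span_singleton_mul_span_pair, span_le]
  rintro z (rfl | rfl)
  · rw [mul_comm θ]
    exact subset_span (Set.mem_insert_of_mem _ rfl)
  · rw [← sq θ, hθ, show ι (s * s * e) = ι e * (ι s * ι s) by simp only [map_mul]; ring]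
    exact mul_mem_left _ _ (subset_span (Set.mem_insert _ _))

theorem IsQuadraticBasis.dvd_of_span_mul_pairIdeal_zero_le (hq : IsQuadraticBasis ι θ d)
    {s t : R} (h : span {θ} * pairIdeal ι θ s 0 ≤ span {ι t} * pairIdeal ι θ s 0) : t ∣ s :=
  have hmem : θ * ι s ∈ span {θ} * pairIdeal ι θ s 0 :=
    mul_mem_mul (mem_span_singleton_self θ) (subset_span (Set.mem_insert _ _))
  have : ι s * θ ∈ span {ι t} := by
    rw [mul_comm]
    exact Ideal.mul_le_left (h hmem)
  hq.dvd_of_mul_mem_span_singleton this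

theorem IsQuadraticBasis.idealEquiv_pairIdeal_neg [Nontrivial R] (hq : IsQuadraticBasis ι θ d)
    {r s t ε : R} (hs : s ≠ 0) (hε : IsUnit ε) (h : r ^ 2 - d = s * t * ε) :
    IdealEquiv (pairIdeal ι θ s r) (pairIdeal ι θ t (-r)) :=
  ⟨ι r - θ, ι s, hq.sub_ne_zero r, hq.map_ne_zero hs, span_sub_mul_pairIdeal hq.sq_eq hε h⟩

variable (ι θ) in
def thetaCoeffIdeal (J : Ideal A) : Ideal R where
  carrier := {y | ∃ x, ι x + ι y * θ ∈ J}
  add_mem' := by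
    rintro y y' ⟨x, hx⟩ ⟨x', hx'⟩
    exact ⟨x + x', by simpa only [map_add, add_mul, add_add_add_comm] using J.add_mem hx hx'⟩
  zero_mem' := ⟨0, by simp⟩
  smul_mem' := by
    rintro c y ⟨x, hx⟩
    have := J.mul_mem_left (ι c) hx
    exact ⟨c * x, by simpa only [smul_eq_mul, map_mul, mul_add, mul_assoc] using this⟩

theorem IsQuadraticBasis.eq_span_pair {J : Ideal A} (hq : IsQuadraticBasis ι θ d) {x₀ g r : R}
    (hx₀ : J.comap ι = span {x₀}) (hg : thetaCoeffIdeal ι θ J = span {g})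
    (hζ : ι r + ι g * θ ∈ J) : J = span {ι x₀, ι r + ι g * θ} := by
  refine le_antisymm (fun z hz => ?_) (span_le.mpr ?_)
  · obtain ⟨x, y, rfl⟩ := hq.exists_eq z
    obtain ⟨c, rfl⟩ := mem_span_singleton.mp (hg ▸ ⟨x, hz⟩ : y ∈ span {g})
    have hsub : ι (x - c * r) ∈ J := by
      convert J.sub_mem hz (J.mul_mem_left (ι c) hζ) using 1
      simp only [map_sub, map_mul]
      ring
    obtain ⟨e, he⟩ := mem_span_singleton.mp (hx₀ ▸ mem_comap.mpr hsub : x - c * r ∈ span {x₀})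
    rw [show ι x + ι (g * c) * θ = ι e * ι x₀ + ι c * (ι r + ι g * θ) by
      rw [← map_mul, mul_comm e, ← he, map_sub, map_mul, map_mul]; ring]
    exact add_mem (mul_mem_left _ _ (subset_span (Set.mem_insert _ _)))
      (mul_mem_left _ _ (subset_span (Set.mem_insert_of_mem _ rfl)))
  · rintro z (rfl | rfl)
    · exact mem_comap.mp (hx₀ ▸ mem_span_singleton_self x₀)
    · exact hζ

end QuadraticBasis

section Domain

variable {R A : Type*} [CommRing R] [CommRing A] [IsDomain A] {ι : R →+* A} {θ : A} {d : R}

theorem pairIdeal_of_associated {s s' : R} (h : Associated s s') (r : R) :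
    pairIdeal ι θ s r = pairIdeal ι θ s' r := by
  rw [pairIdeal, pairIdeal, span_insert, span_insert,
    span_singleton_eq_span_singleton.mpr (h.map ι)]

theorem IsQuadraticBasis.comap_ne_bot (hq : IsQuadraticBasis ι θ d)
    {J : Ideal A} (hJ : J ≠ ⊥) : J.comap ι ≠ ⊥ := by
  obtain ⟨z, hzJ, hz⟩ := Submodule.exists_mem_ne_zero_of_ne_bot hJ
  obtain ⟨x, y, rfl⟩ := hq.exists_eq z
  have hnorm : (ι x + ι y * θ) * (ι x + ι (-y) * θ) = ι (x ^ 2 - d * y ^ 2) := by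
    simp only [map_sub, map_mul, map_pow, map_neg, ← hq.sq_eq]
    ring
  have hconj : ι x + ι (-y) * θ ≠ 0 := fun h => by
    obtain ⟨rfl, hy⟩ := hq.eq_zero x (-y) h
    simp [neg_eq_zero.mp hy] at hz
  refine (Submodule.ne_bot_iff _).mpr ⟨_, mem_comap.mpr (hnorm ▸ J.mul_mem_right _ hzJ), ?_⟩
  rintro h
  rw [h, map_zero] at hnorm
  exact mul_ne_zero hz hconj hnorm

theorem IsQuadraticBasis.exists_eq_span_mul_pairIdeal [IsDomain R] [IsPrincipalIdealRing R]
    (hq : IsQuadraticBasis ι θ d) {J : Ideal A} (hJ : J ≠ ⊥) :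
    ∃ g s r : R, g ≠ 0 ∧ s ≠ 0 ∧ s ∣ r ^ 2 - d ∧ J = span {ι g} * pairIdeal ι θ s r := by
  obtain ⟨x₀, hx₀⟩ := IsPrincipalIdealRing.principal (J.comap ι)
  obtain ⟨g, hg⟩ := IsPrincipalIdealRing.principal (thetaCoeffIdeal ι θ J)
  rw [submodule_span_eq] at hx₀ hg
  have hx₀J : ι x₀ ∈ J := mem_comap.mp (hx₀ ▸ mem_span_singleton_self x₀)
  have hx₀0 : x₀ ≠ 0 := fun h => hq.comap_ne_bot hJ (by rw [hx₀, h, span_singleton_eq_bot])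
  have dvd_of_mem {x y : R} (h : ι x + ι y * θ ∈ J) : g ∣ x := by
    refine mem_span_singleton.mp (hg ▸ ⟨d * y, ?_⟩)
    convert J.mul_mem_left θ h using 1
    rw [map_mul, mul_add, ← hq.sq_eq]
    ring
  obtain ⟨s, rfl⟩ := dvd_of_mem (x := x₀) (y := 0) (by simpa using hx₀J)
  obtain ⟨r', hζ⟩ : g ∈ thetaCoeffIdeal ι θ J := hg ▸ mem_span_singleton_self g
  obtain ⟨r, rfl⟩ := dvd_of_mem hζ
  have hJeq := hq.eq_span_pair hx₀ hg hζ
  refine ⟨g, s, r, left_ne_zero_of_mul hx₀0, right_ne_zero_of_mul hx₀0, ?_, ?_⟩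
  · have hnorm : (ι (g * r) + ι g * θ) * (ι r - θ) = ι (g * (r ^ 2 - d)) := by
      rw [map_mul, ← mul_add, mul_assoc, hq.add_mul_sub r, map_mul]
    have hmem : g * (r ^ 2 - d) ∈ span {g * s} :=
      hx₀ ▸ mem_comap.mpr (hnorm ▸ J.mul_mem_right _ hζ)
    exact (mul_dvd_mul_iff_left (left_ne_zero_of_mul hx₀0)).mp (mem_span_singleton.mp hmem)
  · rw [hJeq, pairIdeal, span_singleton_mul_span_pair, map_mul, map_mul, mul_add]

theorem IsQuadraticBasis.le_of_idealEquiv_pairIdeal_pow_zero [IsDomain R]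
    (hq : IsQuadraticBasis ι θ d) {π : R} (hπ : Irreducible π) {m j₁ j₂ : ℕ}
    (hm : Associated (π ^ m) d) (hj₁ : j₁ ≤ m / 2)
    (h : IdealEquiv (pairIdeal ι θ (π ^ j₁) 0) (pairIdeal ι θ (π ^ j₂) 0)) : j₁ ≤ j₂ := by
  have hsq : π ^ j₁ * π ^ j₁ ∣ d := by
    rw [← pow_add]
    exact (pow_dvd_pow π (by omega)).trans hm.dvd
  have hle := (h.span_mul_le_span_mul_iff θ (ι (π ^ j₁))).mp
    (span_mul_pairIdeal_zero_le hq.sq_eq hsq)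
  exact (pow_dvd_pow_iff hπ.ne_zero hπ.not_isUnit).mp (hq.dvd_of_span_mul_pairIdeal_zero_le hle)

end Domain

theorem IsLocalRing.isUnit_add_of_not_isUnit {R : Type*} [CommRing R] [IsLocalRing R] {u v : R}
    (hu : IsUnit u) (hv : ¬IsUnit v) : IsUnit (u + v) :=
  (isUnit_or_isUnit_of_isUnit_add (by rwa [add_neg_cancel_right])).resolve_right
    (by rwa [IsUnit.neg_iff])

section DiscreteValuationRing

variable {R A : Type*} [CommRing R] [IsDomain R] [IsDiscreteValuationRing R] [CommRing A]
  [IsDomain A] {ι : R →+* A} {θ : A} {d : R} {π : R}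

namespace IsQuadraticBasis

variable (hq : IsQuadraticBasis ι θ d)
include hq

theorem exists_idealEquiv_pairIdeal_pow (hπ : Irreducible π) (h2 : IsUnit (2 : R)) {k : ℕ}
    {r : R} (hk : π ^ k ∣ r ^ 2 - d) :
    ∃ j, π ^ j ∣ d ∧ IdealEquiv (pairIdeal ι θ (π ^ k) r) (pairIdeal ι θ (π ^ j) 0) := by
  have conclude {j : ℕ} {r' : R} (hr' : π ^ j ∣ r') (hd' : π ^ j ∣ r' ^ 2 - d)
      (h : IdealEquiv (pairIdeal ι θ (π ^ k) r) (pairIdeal ι θ (π ^ j) r')) :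
      ∃ j, π ^ j ∣ d ∧ IdealEquiv (pairIdeal ι θ (π ^ k) r) (pairIdeal ι θ (π ^ j) 0) :=
    ⟨j, sub_sub_cancel (r' ^ 2) d ▸ dvd_sub (dvd_pow hr' two_ne_zero) hd', by
      rwa [pairIdeal_congr (s := π ^ j) (r := r') (r' := 0) (by simpa using hr')] at h⟩
  have hπ0 := hπ.ne_zero
  by_cases hkr : π ^ k ∣ r
  · exact conclude hkr hk (.refl _)
  have hr0 : r ≠ 0 := by rintro rfl; exact hkr (dvd_zero _)
  obtain ⟨w, r₀, rfl⟩ := IsDiscreteValuationRing.eq_unit_mul_pow_irreducible hr0 hπ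
  have hwk : w < k := by
    by_contra! h
    exact hkr (dvd_mul_of_dvd_right (pow_dvd_pow π h) _)
  have hrd : (r₀ * π ^ w : R) ^ 2 - d ≠ 0 := fun h =>
    mul_ne_zero (hq.add_ne_zero _) (hq.sub_ne_zero _) (by rw [hq.add_mul_sub, h, map_zero])
  obtain ⟨n, ε, hn⟩ := IsDiscreteValuationRing.eq_unit_mul_pow_irreducible hrd hπ
  have hkn : k ≤ n := (pow_dvd_pow_iff hπ0 hπ.not_isUnit).mp
    ((Units.dvd_mul_left).mp (hn ▸ hk))
  by_cases hnk : n ≤ k + w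
  · -- conjugation lands on an ideal `(π ^ (n - k), -r + θ)` with `π ^ (n - k) ∣ r`
    refine conclude (r' := -(r₀ * π ^ w)) (j := n - k) ?_ ?_
      (hq.idealEquiv_pairIdeal_neg (pow_ne_zero _ hπ0) ε.isUnit ?_)
    · exact (dvd_mul_of_dvd_right (pow_dvd_pow π (by omega)) _).neg_right
    · rw [neg_sq, hn]
      exact dvd_mul_of_dvd_right (pow_dvd_pow π (by omega)) _
    · rw [hn, mul_comm, ← pow_add, Nat.add_sub_cancel' hkn]
  · -- the shift `s = r + π ^ k` has `v(s ^ 2 - d) = k + w`, because `2` is a unit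
    obtain ⟨c, rfl⟩ : ∃ c, k = w + 1 + c := ⟨k - w - 1, by omega⟩
    obtain ⟨q, rfl⟩ : ∃ q, n = 2 * w + 2 + c + q := ⟨n - (2 * w + 2 + c), by omega⟩
    set s := r₀ * π ^ w + π ^ (w + 1 + c)
    have hν : IsUnit (2 * r₀ + π * (π ^ c + π ^ q * ε)) :=
      IsLocalRing.isUnit_add_of_not_isUnit (h2.mul r₀.isUnit)
        fun h => hπ.not_isUnit (isUnit_of_mul_isUnit_left h)
    have hs : s ^ 2 - d = π ^ (w + 1 + c) * π ^ w * (2 * r₀ + π * (π ^ c + π ^ q * ε)) := by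
      linear_combination hn
    refine conclude (r' := -s) (j := w) ?_ ?_ ?_
    · exact (dvd_add (dvd_mul_left _ _) (pow_dvd_pow π (by omega))).neg_right
    · rw [neg_sq, hs]
      exact (dvd_mul_left _ _).mul_right _
    · rw [pairIdeal_congr (r' := s) ⟨-1, by ring⟩]
      exact hq.idealEquiv_pairIdeal_neg (pow_ne_zero _ hπ0) hν hs

theorem exists_idealEquiv_pairIdeal_pow_zero (hπ : Irreducible π) (h2 : IsUnit (2 : R)) {m : ℕ}
    (hm : Associated (π ^ m) d) {J : Ideal A} (hJ : J ≠ ⊥) :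
    ∃ j ≤ m / 2, IdealEquiv J (pairIdeal ι θ (π ^ j) 0) := by
  obtain ⟨g, s, r, hg, hs, hsr, rfl⟩ := hq.exists_eq_span_mul_pairIdeal hJ
  obtain ⟨k, u, rfl⟩ := IsDiscreteValuationRing.eq_unit_mul_pow_irreducible hs hπ
  rw [pairIdeal_of_associated (associated_unit_mul_left _ _ u.isUnit)]
  obtain ⟨j, hjd, hj⟩ := hq.exists_idealEquiv_pairIdeal_pow hπ h2 (dvd_of_mul_left_dvd hsr)
  have hJj := (IdealEquiv.span_singleton_mul_left (hq.map_ne_zero hg) _).trans hj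
  have hjm : j ≤ m := (pow_dvd_pow_iff hπ.ne_zero hπ.not_isUnit).mp (hjd.trans hm.dvd')
  by_cases hj2 : j ≤ m / 2
  · exact ⟨j, hj2, hJj⟩
  obtain ⟨v, hv⟩ := hm
  refine ⟨m - j, by omega, hJj.trans ?_⟩
  simpa using hq.idealEquiv_pairIdeal_neg (r := 0) (pow_ne_zero j hπ.ne_zero) (-v).isUnit
    (t := π ^ (m - j)) (by rw [← hv, ← pow_add, Nat.add_sub_cancel' hjm]; simp)

theorem card_quot_idealEquiv (hπ : Irreducible π) (h2 : IsUnit (2 : R)) {m : ℕ}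
    (hm : Associated (π ^ m) d) :
    Nat.card (Quot fun J₁ J₂ : {J : Ideal A // J ≠ ⊥} => IdealEquiv J₁.1 J₂.1) = m / 2 + 1 := by
  let F (j : Fin (m / 2 + 1)) : Quot fun J₁ J₂ : {J : Ideal A // J ≠ ⊥} => IdealEquiv J₁.1 J₂.1 :=
    Quot.mk _ ⟨pairIdeal ι θ (π ^ (j : ℕ)) 0, hq.pairIdeal_ne_bot _ _⟩
  have hequiv : Equivalence fun J₁ J₂ : {J : Ideal A // J ≠ ⊥} => IdealEquiv J₁.1 J₂.1 :=
    ⟨fun _ => .refl _, .symm, .trans⟩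
  have hinj : F.Injective := fun j₁ j₂ h => by
    have h12 := hequiv.eqvGen_iff.mp (Quot.eqvGen_exact h)
    exact Fin.ext (le_antisymm
      (hq.le_of_idealEquiv_pairIdeal_pow_zero hπ hm (Nat.lt_succ_iff.mp j₁.2) h12)
      (hq.le_of_idealEquiv_pairIdeal_pow_zero hπ hm (Nat.lt_succ_iff.mp j₂.2) h12.symm))
  have hsurj : F.Surjective := by
    rintro ⟨J, hJ⟩
    obtain ⟨j, hj, hJj⟩ := hq.exists_idealEquiv_pairIdeal_pow_zero hπ h2 hm hJ
    exact ⟨⟨j, Nat.lt_succ_of_le hj⟩, Quot.sound hJj.symm⟩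
  rw [← Nat.card_eq_of_bijective F ⟨hinj, hsurj⟩, Nat.card_fin]

end IsQuadraticBasis

end DiscreteValuationRing

open AdjoinRoot in
theorem isQuadraticBasis_adjoinRoot {R : Type*} [CommRing R] [Nontrivial R] {c d : R} {f : R[X]}
    (hf : f = (X - C c) ^ 2 - C d) :
    IsQuadraticBasis (of f) (root f - of f c) d := by
  have hmonic : f.Monic := by rw [hf]; monicity!
  have hdeg : f.natDegree = 2 := by rw [hf]; compute_degree!
  have hmk (x y : R) : of f x + of f y * (root f - of f c) = mk f (C y * X + C (x - y * c)) := by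
    simp only [map_add, map_mul, mk_C, mk_X, map_sub]
    ring
  refine ⟨?_, fun z => ?_, fun x y h => ?_⟩
  · have := (congrArg (eval₂ (of f) (root f)) hf).symm.trans (eval₂_root f)
    simp only [eval₂_sub, eval₂_pow, eval₂_X, eval₂_C] at this
    exact sub_eq_zero.mp this
  · induction z using induction_on with | ih p => ?_
    have hlt : (p %ₘ f).natDegree < 2 :=
      hdeg ▸ natDegree_modByMonic_lt p hmonic (fun h => by simp [h] at hdeg)
    refine ⟨(p %ₘ f).coeff 0 + (p %ₘ f).coeff 1 * c, (p %ₘ f).coeff 1, ?_⟩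
    rw [hmk, add_sub_cancel_right, ← eq_X_add_C_of_natDegree_le_one (by omega),
      mk_eq_mk, modByMonic_eq_sub_mul_div p f, sub_sub_cancel]
    exact dvd_mul_right _ _
  · rw [hmk, mk_eq_zero] at h
    have h0 : C y * X + C (x - y * c) = 0 := by_contra fun h0 =>
      hmonic.not_dvd_of_natDegree_lt h0 (by rw [hdeg]; compute_degree!) h
    have hy : y = 0 := by simpa using congrArg (coeff · 1) h0
    subst hy
    simpa using congrArg (coeff · 0) h0

theorem class_number_two_unit_general
    (R : Type*) [CommRing R] [IsDomain R] [IsDiscreteValuationRing R]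
    (K : Type*) [Field K] [Algebra R K]
    (π : R) (hπ : Irreducible π) (h2 : IsUnit (2 : R))
    (a b : R) (f : R[X]) (hf : f = X ^ 2 - C a * X - C b)
    (hirr : Irreducible (f.map (algebraMap R K)))
    (m : ℕ) (hm : Associated (π ^ m) (Ring.inverse 4 * a ^ 2 + b)) :
    Nat.card
      (Quot (fun (J₁ J₂ : {J : Ideal (R[X] ⧸ Ideal.span {f}) // J ≠ ⊥}) =>
        ∃ α₁ α₂ : R[X] ⧸ Ideal.span {f}, α₁ ≠ 0 ∧ α₂ ≠ 0 ∧
          Ideal.span {α₁} * J₁.1 = Ideal.span {α₂} * J₂.1)) = m / 2 + 1 := by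
  have hmonic : f.Monic := by rw [hf]; monicity!
  have hprime : Prime f := UniqueFactorizationMonoid.irreducible_iff_prime.mp
    (hmonic.irreducible_of_irreducible_map (algebraMap R K) f hirr)
  have := AdjoinRoot.isDomain_of_prime hprime
  have hsq : Ring.inverse (2 : R) ^ 2 = Ring.inverse 4 := by rw [Ring.inverse_pow]; norm_num
  have h2a : C 2 * C (Ring.inverse 2 * a) = C a := by
    rw [← C_mul, ← mul_assoc, Ring.mul_inverse_cancel 2 h2, one_mul]
  have hf' : f = (X - C (Ring.inverse 2 * a)) ^ 2 - C (Ring.inverse 4 * a ^ 2 + b) := by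
    rw [hf, ← hsq]
    simp only [C_add, C_mul, C_pow, map_ofNat] at h2a ⊢
    linear_combination X * h2a
  exact (isQuadraticBasis_adjoinRoot hf').card_quot_idealEquiv hπ h2 hm

/-- Let `R` be a DVR (with uniformizer `π`) in which `2` is a unit,
`f(x) = x² − ax − b ∈ R[x]` monic irreducible over the fraction field `K`, and `θ` the
class of `x` in `R[θ] := R[x]/(f)`. If `v(a²/4 + b) = m` (i.e. `a²/4 + b` is
associated to `π^m`), then the set of equivalence classes of nonzero ideals of `R[θ]`
is finite of cardinality `⌊m/2⌋ + 1`. -/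
theorem class_number_two_unit
    (R : Type*) [CommRing R] [IsDomain R] [IsDiscreteValuationRing R]
    (K : Type*) [Field K] [Algebra R K] [IsFractionRing R K]
    (π : R) (hπ : Irreducible π) (h2 : IsUnit (2 : R))
    (a b : R) (f : R[X]) (hf : f = X ^ 2 - C a * X - C b)
    (hirr : Irreducible (f.map (algebraMap R K)))
    (m : ℕ) (hm : Associated (π ^ m) (Ring.inverse 4 * a ^ 2 + b)) :
    Nat.card
      (Quot (fun (J₁ J₂ : {J : Ideal (R[X] ⧸ Ideal.span {f}) // J ≠ ⊥}) =>
        ∃ α₁ α₂ : R[X] ⧸ Ideal.span {f}, α₁ ≠ 0 ∧ α₂ ≠ 0 ∧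
          Ideal.span {α₁} * J₁.1 = Ideal.span {α₂} * J₂.1)) = m / 2 + 1 :=
  class_number_two_unit_general R K π hπ h2 a b f hf hirr m hm
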